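/- Subadditivity of von Neumann entropy: for any bipartite density matrix σ_{AB} on ℂ^{d_A} ⊗ ℂ^{d_B}, S(AB) ≤ S(A) + S(B), where S(A) and S(B) are entropies of the reduced states. -/

import Mathlib

open Matrix
open scoped Classical ComplexOrder

/-- The von Neumann entropy `S(σ) = −Tr(σ log σ)`, computed via the eigenvalues
of a Hermitian matrix (junk value `0` on non-Hermitian matrices). -/
noncomputable def vonNeumannEntropy {ι : Type*} [Fintype ι] [DecidableEq ι] (σ : Matrix ι ι ℂ) : ℝ :=
  if h : σ.IsHermitian then -∑ i, h.eigenvalues i * Real.log (h.eigenvalues i) else 0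

/-- Partial trace over the second tensor factor: `σ_A = Tr_B σ_{AB}`. -/
noncomputable def ptraceB {dA dB : ℕ}
    (σ : Matrix (Fin dA × Fin dB) (Fin dA × Fin dB) ℂ) :
    Matrix (Fin dA) (Fin dA) ℂ :=
  Matrix.of fun i j => ∑ k : Fin dB, σ (i, k) (j, k)

/-- Partial trace over the first tensor factor: `σ_B = Tr_A σ_{AB}`. -/
noncomputable def ptraceA {dA dB : ℕ}
    (σ : Matrix (Fin dA × Fin dB) (Fin dA × Fin dB) ℂ) :
    Matrix (Fin dB) (Fin dB) ℂ :=
  Matrix.of fun i j => ∑ k : Fin dA, σ (k, i) (k, j)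

/-!
Write `p`, `a`, `b` for the spectra of `σ`, `σ_A`, `σ_B`, and let `W = U_A ⊗ U_B` be the
product of the eigenbases of the marginals. The diagonal `r` of `W* σ W` is a probability
distribution on pairs `(i, j)` whose marginals are `a` and `b`, because conjugating by `U_B` in
the second factor does not change the partial trace. Hence `∑ r log (a_i b_j) = -S(A) - S(B)`.
On the other hand `r` is obtained from `p` by the doubly stochastic matrix `|(U_σ* W)_{mk}|²`,
and the scalar inequality `p - q ≤ p (log p - log q)` summed against it gives Klein's inequality
`∑ r log (a_i b_j) ≤ ∑ p log p = -S(AB)`.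
-/

open Real
open scoped Kronecker

lemma sub_le_mul_log_sub_log {p q : ℝ} (hp : 0 ≤ p) (hq : 0 ≤ q) (hpq : q = 0 → p = 0) :
    p - q ≤ p * (log p - log q) := by
  rcases hp.eq_or_lt with rfl | hp
  · simpa using hq
  have hq : 0 < q := hq.lt_of_ne fun h => hp.ne' (hpq h.symm)
  have h := one_sub_inv_le_log_of_pos (div_pos hp hq)
  rw [log_div hp.ne' hq.ne', inv_div] at h
  calc p - q = p * (1 - q / p) := by field_simp
    _ ≤ p * (log p - log q) := mul_le_mul_of_nonneg_left h hp.le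

lemma sum_vecMul_mul_log_le_of_mem_doublyStochastic {n : Type*} [Fintype n] [DecidableEq n]
    {w : Matrix n n ℝ} (hw : w ∈ doublyStochastic ℝ n) {p q : n → ℝ} (hp : 0 ≤ p) (hq : 0 ≤ q)
    (hsum : ∑ i, q i ≤ ∑ i, p i) (hsupp : ∀ i, q i = 0 → (p ᵥ* w) i = 0) :
    ∑ i, (p ᵥ* w) i * log (q i) ≤ ∑ i, p i * log (p i) := by
  obtain ⟨hw0, hrow, hcol⟩ := mem_doublyStochastic_iff_sum.mp hw
  have hterm : ∀ m i, w m i * (p m - q i) ≤ w m i * (p m * (log (p m) - log (q i))) := by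
    intro m i
    rcases (hw0 m i).eq_or_lt with h0 | hpos
    · simp [← h0]
    refine mul_le_mul_of_nonneg_left (sub_le_mul_log_sub_log (hp m) (hq i) fun hqi => ?_) hpos.le
    have h := (Finset.sum_eq_zero_iff_of_nonneg fun m _ => mul_nonneg (hp m) (hw0 m i)).mp
      (hsupp i hqi) m (Finset.mem_univ m)
    exact (mul_eq_zero.mp h).resolve_right hpos.ne'
  have hsum' := Finset.sum_le_sum fun m (_ : m ∈ Finset.univ) =>
    Finset.sum_le_sum fun i (_ : i ∈ Finset.univ) => hterm m i
  have h1 : ∑ m, ∑ i, w m i * p m = ∑ m, p m := by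
    simp [← Finset.sum_mul, hrow]
  have h2 : ∑ m, ∑ i, w m i * q i = ∑ i, q i := by
    rw [Finset.sum_comm]; simp [← Finset.sum_mul, hcol]
  have h3 : ∑ m, ∑ i, w m i * (p m * log (p m)) = ∑ m, p m * log (p m) := by
    simp [← Finset.sum_mul, hrow]
  have h4 : ∑ m, ∑ i, w m i * (p m * log (q i)) = ∑ i, (p ᵥ* w) i * log (q i) := by
    rw [Finset.sum_comm]
    simp only [vecMul, dotProduct, Finset.sum_mul]
    exact Finset.sum_congr rfl fun i _ => Finset.sum_congr rfl fun m _ => by ring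
  simp only [mul_sub, Finset.sum_sub_distrib, h1, h2, h3, h4] at hsum'
  linarith

lemma normSq_mem_doublyStochastic {n : Type*} [Fintype n] [DecidableEq n] {U : Matrix n n ℂ}
    (hU : U ∈ unitaryGroup n ℂ) :
    (of fun i j => Complex.normSq (U i j)) ∈ doublyStochastic ℝ n := by
  refine mem_doublyStochastic_iff_sum.mpr
    ⟨fun i j => Complex.normSq_nonneg _, fun i => ?_, fun j => ?_⟩
  · have h := congrFun (congrFun hU.2 i) i
    simp only [mul_apply, star_apply, one_apply_eq, RCLike.star_def, Complex.mul_conj] at h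
    exact_mod_cast h
  · have h := congrFun (congrFun hU.1 j) j
    simp only [mul_apply, star_apply, one_apply_eq, RCLike.star_def, mul_comm (starRingEnd ℂ _),
      Complex.mul_conj] at h
    exact_mod_cast h

lemma star_mul_diagonal_mul_apply_self {n : Type*} [Fintype n] [DecidableEq n]
    (B : Matrix n n ℂ) (p : n → ℝ) (i : n) :
    (star B * diagonal (RCLike.ofReal ∘ p) * B : Matrix n n ℂ) i i
      = ((p ᵥ* of fun m j => Complex.normSq (B m j)) i : ℂ) := by
  rw [mul_apply]
  simp only [mul_diagonal, star_apply, vecMul, dotProduct, of_apply, Complex.ofReal_sum,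
    Complex.ofReal_mul, Complex.normSq_eq_conj_mul_self, RCLike.star_def, Function.comp_apply]
  exact Finset.sum_congr rfl fun m _ => by rw [RCLike.ofReal_eq_complex_ofReal]; ring

lemma Matrix.PosSemidef.sum_re_star_mul_mul_apply_self_mul_log_le {n : Type*} [Fintype n]
    [DecidableEq n] {A : Matrix n n ℂ} (hA : A.PosSemidef) {W : Matrix n n ℂ}
    (hW : W ∈ unitaryGroup n ℂ)
    {q : n → ℝ} (hq : 0 ≤ q) (hsum : ∑ i, q i ≤ ∑ i, hA.1.eigenvalues i)
    (hsupp : ∀ i, q i = 0 → ((star W * A * W) i i).re = 0) :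
    ∑ i, ((star W * A * W) i i).re * log (q i)
      ≤ ∑ i, hA.1.eigenvalues i * log (hA.1.eigenvalues i) := by
  set U := hA.1.eigenvectorUnitary
  set B := star (U : Matrix n n ℂ) * W
  have hB : B ∈ unitaryGroup n ℂ := mul_mem (Unitary.star_mem U.2) hW
  have hconj : star W * A * W = star B * diagonal (RCLike.ofReal ∘ hA.1.eigenvalues) * B := by
    conv_lhs => rw [hA.1.spectral_theorem, Unitary.conjStarAlgAut_apply]
    simp only [B, star_mul, star_star, mul_assoc]
    rfl
  have hdiag := star_mul_diagonal_mul_apply_self B hA.1.eigenvalues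
  simp only [hconj, hdiag, Complex.ofReal_re] at hsupp ⊢
  exact sum_vecMul_mul_log_le_of_mem_doublyStochastic (normSq_mem_doublyStochastic hB)
    hA.eigenvalues_nonneg hq hsum hsupp

lemma vonNeumannEntropy_eq_of_isHermitian {ι : Type*} [Fintype ι] [DecidableEq ι]
    {A : Matrix ι ι ℂ} (hA : A.IsHermitian) :
    vonNeumannEntropy A = -∑ i, hA.eigenvalues i * log (hA.eigenvalues i) :=
  dif_pos hA

lemma Matrix.IsHermitian.sum_eigenvalues_eq_one {n : Type*} [Fintype n] [DecidableEq n]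
    {A : Matrix n n ℂ} (hA : A.IsHermitian) (htr : A.trace = 1) :
    ∑ i, hA.eigenvalues i = 1 := by
  simpa using congrArg Complex.re (hA.trace_eq_sum_eigenvalues.symm.trans htr)

lemma Matrix.IsHermitian.star_eigenvectorUnitary_mul_mul_self {n : Type*} [Fintype n]
    [DecidableEq n] {A : Matrix n n ℂ} (hA : A.IsHermitian) :
    star (hA.eigenvectorUnitary : Matrix n n ℂ) * A * (hA.eigenvectorUnitary : Matrix n n ℂ)
      = diagonal (RCLike.ofReal ∘ hA.eigenvalues) := by
  simpa only [Unitary.conjStarAlgAut_star_apply] using hA.conjStarAlgAut_star_eigenvectorUnitary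

section Marginals

variable {ι κ : Type*} [Fintype ι] [Fintype κ] {r : ι × κ → ℝ} {a : ι → ℝ} {b : κ → ℝ}

lemma apply_eq_zero_of_marginals (hr : 0 ≤ r) (ha : ∀ i, ∑ j, r (i, j) = a i)
    (hb : ∀ j, ∑ i, r (i, j) = b j) {i : ι} {j : κ} (h : a i * b j = 0) : r (i, j) = 0 := by
  refine le_antisymm ?_ (hr _)
  rcases mul_eq_zero.mp h with h | h
  · exact (Finset.single_le_sum (fun j _ => hr (i, j)) (Finset.mem_univ j)).trans_eq (h ▸ ha i)
  · exact (Finset.single_le_sum (fun i _ => hr (i, j)) (Finset.mem_univ i)).trans_eq (h ▸ hb j)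

lemma sum_mul_log_mul_eq_of_marginals (hr : 0 ≤ r) (ha : ∀ i, ∑ j, r (i, j) = a i)
    (hb : ∀ j, ∑ i, r (i, j) = b j) :
    ∑ x, r x * log (a x.1 * b x.2) = ∑ i, a i * log (a i) + ∑ j, b j * log (b j) := by
  have hsplit : ∀ i j,
      r (i, j) * log (a i * b j) = r (i, j) * log (a i) + r (i, j) * log (b j) := by
    intro i j
    by_cases hab : a i * b j = 0
    · simp [apply_eq_zero_of_marginals hr ha hb hab]
    · rw [log_mul (left_ne_zero_of_mul hab) (right_ne_zero_of_mul hab), mul_add]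
  simp only [Fintype.sum_prod_type, hsplit, Finset.sum_add_distrib]
  rw [Finset.sum_comm (f := fun i j => r (i, j) * log (b j))]
  simp only [← Finset.sum_mul, ha, hb]

end Marginals

section PartialTrace

variable {dA dB : ℕ}

lemma ptraceB_eq_sum_submatrix (σ : Matrix (Fin dA × Fin dB) (Fin dA × Fin dB) ℂ) :
    ptraceB σ = ∑ k, σ.submatrix (·, k) (·, k) := by
  ext i j; simp [ptraceB, Matrix.sum_apply]

lemma ptraceA_eq_sum_submatrix (σ : Matrix (Fin dA × Fin dB) (Fin dA × Fin dB) ℂ) :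
    ptraceA σ = ∑ k, σ.submatrix (k, ·) (k, ·) := by
  ext i j; simp [ptraceA, Matrix.sum_apply]

lemma Matrix.PosSemidef.ptraceB {σ : Matrix (Fin dA × Fin dB) (Fin dA × Fin dB) ℂ}
    (hσ : σ.PosSemidef) : (ptraceB σ).PosSemidef := by
  rw [ptraceB_eq_sum_submatrix]
  exact posSemidef_sum _ fun k _ => hσ.submatrix _

lemma Matrix.PosSemidef.ptraceA {σ : Matrix (Fin dA × Fin dB) (Fin dA × Fin dB) ℂ}
    (hσ : σ.PosSemidef) : (ptraceA σ).PosSemidef := by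
  rw [ptraceA_eq_sum_submatrix]
  exact posSemidef_sum _ fun k _ => hσ.submatrix _

lemma trace_ptraceB (σ : Matrix (Fin dA × Fin dB) (Fin dA × Fin dB) ℂ) :
    (ptraceB σ).trace = σ.trace := by
  simp [Matrix.trace, ptraceB, Fintype.sum_prod_type]

lemma trace_ptraceA (σ : Matrix (Fin dA × Fin dB) (Fin dA × Fin dB) ℂ) :
    (ptraceA σ).trace = σ.trace := by
  simp [Matrix.trace, ptraceA, Fintype.sum_prod_type, Finset.sum_comm (γ := Fin dA)]

lemma ptraceB_conj_kronecker (σ : Matrix (Fin dA × Fin dB) (Fin dA × Fin dB) ℂ)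
    (X : Matrix (Fin dA) (Fin dA) ℂ) {Y : Matrix (Fin dB) (Fin dB) ℂ}
    (hY : Y ∈ unitaryGroup (Fin dB) ℂ) :
    ptraceB (star (X ⊗ₖ Y) * σ * (X ⊗ₖ Y)) = star X * ptraceB σ * X := by
  have hYY : ∀ l l', ∑ k, Y l' k * star (Y l k) = if l' = l then 1 else 0 := fun l l' => by
    simpa [Matrix.mul_apply, Matrix.one_apply] using congrFun (congrFun hY.2 l') l
  ext i i'
  simp only [ptraceB, of_apply, mul_apply, star_apply, kroneckerMap_apply, Fintype.sum_prod_type,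
    star_mul', Finset.sum_mul, Finset.mul_sum]
  rw [Finset.sum_comm]
  refine Finset.sum_congr rfl fun c _ => ?_
  rw [Finset.sum_comm]
  have hterm : ∀ a b d, ∑ k, star (X a i) * star (Y b k) * σ (a, b) (c, d) * (X c i' * Y d k)
      = star (X a i) * σ (a, b) (c, d) * X c i' * ∑ k, Y d k * star (Y b k) := fun a b d => by
    rw [Finset.mul_sum]
    exact Finset.sum_congr rfl fun k _ => by ring
  have hswap : ∀ d,
      ∑ k, ∑ a, ∑ b, star (X a i) * star (Y b k) * σ (a, b) (c, d) * (X c i' * Y d k)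
        = ∑ a, ∑ b, ∑ k, star (X a i) * star (Y b k) * σ (a, b) (c, d) * (X c i' * Y d k) :=
      fun d => by
    rw [Finset.sum_comm]
    exact Finset.sum_congr rfl fun a _ => Finset.sum_comm
  simp only [hswap, hterm, hYY, mul_ite, mul_one, mul_zero, Finset.sum_ite_eq, Finset.mem_univ,
    if_true]
  exact Finset.sum_comm

lemma ptraceA_eq_ptraceB_submatrix_swap (σ : Matrix (Fin dA × Fin dB) (Fin dA × Fin dB) ℂ) :
    ptraceA σ = ptraceB (σ.submatrix Prod.swap Prod.swap) := rfl

lemma ptraceA_conj_kronecker (σ : Matrix (Fin dA × Fin dB) (Fin dA × Fin dB) ℂ)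
    {X : Matrix (Fin dA) (Fin dA) ℂ} (Y : Matrix (Fin dB) (Fin dB) ℂ)
    (hX : X ∈ unitaryGroup (Fin dA) ℂ) :
    ptraceA (star (X ⊗ₖ Y) * σ * (X ⊗ₖ Y)) = star Y * ptraceA σ * Y := by
  have hswap : (X ⊗ₖ Y).submatrix Prod.swap Prod.swap = Y ⊗ₖ X := by
    ext ⟨a, b⟩ ⟨c, d⟩; simp [mul_comm]
  rw [ptraceA_eq_ptraceB_submatrix_swap, ptraceA_eq_ptraceB_submatrix_swap,
    ← ptraceB_conj_kronecker _ Y hX, ← hswap, ← Equiv.coe_prodComm,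
    star_eq_conjTranspose, star_eq_conjTranspose, conjTranspose_submatrix,
    submatrix_mul_equiv, submatrix_mul_equiv]

lemma sum_conj_kronecker_apply_left_eq_eigenvalues
    {σ : Matrix (Fin dA × Fin dB) (Fin dA × Fin dB) ℂ} (hA : (ptraceB σ).IsHermitian)
    {Y : Matrix (Fin dB) (Fin dB) ℂ} (hY : Y ∈ unitaryGroup (Fin dB) ℂ) (i : Fin dA) :
    ∑ j, (star ((hA.eigenvectorUnitary : Matrix (Fin dA) (Fin dA) ℂ) ⊗ₖ Y) * σ *
        ((hA.eigenvectorUnitary : Matrix (Fin dA) (Fin dA) ℂ) ⊗ₖ Y)) (i, j) (i, j)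
      = hA.eigenvalues i := by
  have h := ptraceB_conj_kronecker σ (hA.eigenvectorUnitary : Matrix (Fin dA) (Fin dA) ℂ) hY
  rw [hA.star_eigenvectorUnitary_mul_mul_self] at h
  simpa [ptraceB] using congrFun (congrFun h i) i

lemma sum_conj_kronecker_apply_right_eq_eigenvalues
    {σ : Matrix (Fin dA × Fin dB) (Fin dA × Fin dB) ℂ} (hB : (ptraceA σ).IsHermitian)
    {X : Matrix (Fin dA) (Fin dA) ℂ} (hX : X ∈ unitaryGroup (Fin dA) ℂ) (j : Fin dB) :
    ∑ i, (star (X ⊗ₖ (hB.eigenvectorUnitary : Matrix (Fin dB) (Fin dB) ℂ)) * σ *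
        (X ⊗ₖ (hB.eigenvectorUnitary : Matrix (Fin dB) (Fin dB) ℂ))) (i, j) (i, j)
      = hB.eigenvalues j := by
  have h := ptraceA_conj_kronecker σ (hB.eigenvectorUnitary : Matrix (Fin dB) (Fin dB) ℂ) hX
  rw [hB.star_eigenvectorUnitary_mul_mul_self] at h
  simpa [ptraceA] using congrFun (congrFun h j) j

end PartialTrace

/-- Subadditivity of the von Neumann entropy: `S(AB) ≤ S(A) + S(B)`. -/
theorem stmt_14 (dA dB : ℕ)
    (σ : Matrix (Fin dA × Fin dB) (Fin dA × Fin dB) ℂ)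
    (hσ : σ.PosSemidef) (htr : σ.trace = 1) :
    vonNeumannEntropy σ ≤ vonNeumannEntropy (ptraceB σ) + vonNeumannEntropy (ptraceA σ) := by
  have hA := hσ.ptraceB
  have hB := hσ.ptraceA
  set a := hA.1.eigenvalues
  set b := hB.1.eigenvalues
  set UA := hA.1.eigenvectorUnitary
  set UB := hB.1.eigenvectorUnitary
  set W := (UA : Matrix (Fin dA) (Fin dA) ℂ) ⊗ₖ (UB : Matrix (Fin dB) (Fin dB) ℂ)
  set r : Fin dA × Fin dB → ℝ := fun x => ((star W * σ * W) x x).re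
  have hr : 0 ≤ r := fun x => Complex.nonneg_iff.mp
    ((hσ.conjTranspose_mul_mul_same W).diag_nonneg (i := x)) |>.1
  have hra : ∀ i, ∑ j, r (i, j) = a i := fun i => by
    simpa using congrArg Complex.re (sum_conj_kronecker_apply_left_eq_eigenvalues hA.1 UB.2 i)
  have hrb : ∀ j, ∑ i, r (i, j) = b j := fun j => by
    simpa using congrArg Complex.re (sum_conj_kronecker_apply_right_eq_eigenvalues hB.1 UA.2 j)
  have hsa : ∑ i, a i = 1 := hA.1.sum_eigenvalues_eq_one (trace_ptraceB σ ▸ htr)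
  have hsb : ∑ j, b j = 1 := hB.1.sum_eigenvalues_eq_one (trace_ptraceA σ ▸ htr)
  have hklein := hσ.sum_re_star_mul_mul_apply_self_mul_log_le (q := fun x => a x.1 * b x.2)
    (kronecker_mem_unitary UA.2 UB.2) (fun x => mul_nonneg (hA.eigenvalues_nonneg _)
      (hB.eigenvalues_nonneg _))
    (by simp only [Fintype.sum_prod_type, ← Finset.mul_sum, ← Finset.sum_mul, hsa, hsb,
      hσ.1.sum_eigenvalues_eq_one htr, one_mul, le_refl])
    (fun x hx => apply_eq_zero_of_marginals hr hra hrb hx)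
  rw [sum_mul_log_mul_eq_of_marginals hr hra hrb] at hklein
  rw [vonNeumannEntropy_eq_of_isHermitian hσ.1, vonNeumannEntropy_eq_of_isHermitian hA.1,
    vonNeumannEntropy_eq_of_isHermitian hB.1]
  linarith
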